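/- Suppose f is analytic on a Stolz region S_r(ζ) at ζ ∈ 𝕋, b ∈ ℂ, and assume: for each sufficiently small δ > 0 there is a set E_δ ⊆ B(ζ,δ) with γ(E_δ)/δ → 0 and sup{ |f(λ) − b| : λ ∈ S_r(ζ) ∩ B(ζ,δ) ∖ E_δ } → 0 as δ → 0. Assume further the mean-value capacity estimate: there exist absolute constants ε₁ > 0 and C₁ < ∞ such that whenever R > 0 and E ⊆ closure(B(0,R)) with γ(E) < Rε₁, every function g analytic on a neighborhood of closure(B(0,R)) satisfies |g(λ)| ≤ (C₁/(πR²)) ∫_{closure(B(0,R))∖E} |g| dA for all λ ∈ B(0, R/2). Then for every 0 < ρ < r, f(λ) → b as λ → ζ within S_ρ(ζ). -/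

import Mathlib

open MeasureTheory Filter Metric Topology
open scoped ENNReal

/-- Analytic capacity of a compact set `K ⊆ ℂ`. -/
noncomputable def gammaCapCompact (K : Set ℂ) : ℝ≥0∞ :=
  sSup {c : ℝ≥0∞ | ∃ (f : ℂ → ℂ) (finf d : ℂ),
    DifferentiableOn ℂ f Kᶜ ∧ (∀ z ∈ Kᶜ, ‖f z‖ ≤ 1) ∧
    Tendsto f (Bornology.cobounded ℂ) (𝓝 finf) ∧
    Tendsto (fun z => z * (f z - finf)) (Bornology.cobounded ℂ) (𝓝 d) ∧
    c = ENNReal.ofReal ‖d‖}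

/-- Analytic capacity of an arbitrary set `E ⊆ ℂ`. -/
noncomputable def gammaCap (E : Set ℂ) : ℝ≥0∞ :=
  ⨆ (K : Set ℂ) (_ : IsCompact K) (_ : K ⊆ E), gammaCapCompact K

/-- The Stolz region `S_r(ζ)`: interior of the convex hull of `{|z| ≤ r} ∪ {ζ}`. -/
noncomputable def stolz (r : ℝ) (ζ : ℂ) : Set ℂ :=
  interior (convexHull ℝ (Metric.closedBall (0 : ℂ) r ∪ {ζ}))

/-!
Fix `l ∈ S_ρ(ζ)` and put `d = |l - ζ|`. Since `S_ρ(ζ)` is a cone with vertex `ζ` narrower than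
`S_r(ζ)`, the closed disc of radius `c d` about `l` (with `c` depending only on `ρ` and `r`) lies
in `S_r(ζ) ∩ B(ζ, 2d)`. Off `E_{2d}` this disc carries `|f - b| ≤ ε`, and analytic capacity is
monotone and translation invariant, so the part of the disc inside `E_{2d}` has capacity
`o(d) < c d ε₁`. The capacitary mean-value inequality then bounds `|f(l) - b|` by `|C₁| ε`.
-/

lemma gammaCapCompact_le_image_add (K : Set ℂ) (a : ℂ) :
    gammaCapCompact K ≤ gammaCapCompact ((· + a) '' K) := by
  refine sSup_le_sSup ?_
  rintro c ⟨f, finf, d, hdiff, hbnd, hinf, hd, rfl⟩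
  have hmem : ∀ z ∈ ((· + a) '' K)ᶜ, z - a ∈ Kᶜ := fun z hz hzK => hz ⟨z - a, hzK, by ring⟩
  have hshift := tendsto_sub_const_cobounded a
  have hvanish : Tendsto (fun z => a * (f (z - a) - finf)) (Bornology.cobounded ℂ) (𝓝 0) := by
    simpa using tendsto_const_nhds.mul ((hinf.comp hshift).sub_const finf)
  refine ⟨fun z => f (z - a), finf, d, hdiff.comp (differentiable_id.sub_const a).differentiableOn
    hmem, fun z hz => hbnd _ (hmem z hz), hinf.comp hshift, ?_, rfl⟩
  simpa only [add_zero] using ((hd.comp hshift).add hvanish).congr fun z => by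
    simp only [Function.comp_apply]; ring

lemma gammaCap_mono {E F : Set ℂ} (h : E ⊆ F) : gammaCap E ≤ gammaCap F :=
  iSup₂_le fun K hK => iSup_le fun hKE => le_iSup₂_of_le K hK <| le_iSup_of_le (hKE.trans h) le_rfl

lemma gammaCap_preimage_add_le (E : Set ℂ) (a : ℂ) : gammaCap ((· + a) ⁻¹' E) ≤ gammaCap E :=
  iSup₂_le fun K hK => iSup_le fun hKE =>
    (gammaCapCompact_le_image_add K a).trans <|
      le_iSup₂_of_le _ (hK.image (continuous_add_const a)) <|
        le_iSup_of_le (Set.image_subset_iff.mpr hKE) le_rfl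

section Stolz

variable {ρ r t c : ℝ} {ζ l : ℂ}

lemma stolz_subset_ball_one (hρ : ρ ≤ 1) (hζ : ‖ζ‖ = 1) : stolz ρ ζ ⊆ ball 0 1 := by
  have hhull : convexHull ℝ (closedBall (0 : ℂ) ρ ∪ {ζ}) ⊆ closedBall 0 1 :=
    convexHull_min (Set.union_subset (closedBall_subset_closedBall hρ) (by simp [hζ]))
      (convex_closedBall _ _)
  rw [← interior_closedBall _ one_ne_zero]
  exact interior_mono hhull

lemma ne_of_mem_stolz (hρ : ρ ≤ 1) (hζ : ‖ζ‖ = 1) (hl : l ∈ stolz ρ ζ) : l ≠ ζ := by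
  rintro rfl
  simpa [hζ] using stolz_subset_ball_one hρ hζ hl

lemma exists_dist_smul_le_of_mem_stolz (hρ0 : 0 ≤ ρ) (hρ1 : ρ ≤ 1) (hζ : ‖ζ‖ = 1)
    (hl : l ∈ stolz ρ ζ) : ∃ t, 0 < t ∧ t ≤ 1 ∧ dist l ((1 - t) • ζ) ≤ t * ρ := by
  have hl' := interior_subset hl
  rw [Set.union_singleton, convexHull_insert ⟨0, by simpa using hρ0⟩,
    (convex_closedBall _ _).convexHull_eq, mem_convexJoin] at hl'
  obtain ⟨_, rfl, u, hu, a, t, ha, ht, hat, rfl⟩ := hl'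
  have ht0 : t ≠ 0 := by
    rintro rfl
    exact ne_of_mem_stolz hρ1 hζ hl (by simp [show a = 1 by linarith])
  refine ⟨t, ht.lt_of_ne' ht0, by linarith, ?_⟩
  rw [show a = 1 - t by linarith, dist_eq_norm, add_sub_cancel_left, norm_smul,
    Real.norm_of_nonneg ht]
  exact mul_le_mul_of_nonneg_left (mem_closedBall_zero_iff.mp hu) ht

lemma ball_smul_subset_stolz (ht0 : 0 < t) (ht1 : t ≤ 1) :
    ball ((1 - t) • ζ) (t * r) ⊆ stolz r ζ := by
  intro w hw
  set v := t⁻¹ • (w - (1 - t) • ζ)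
  have hv : v ∈ interior (convexHull ℝ (closedBall (0 : ℂ) r ∪ {ζ})) := by
    refine interior_mono (ball_subset_closedBall.trans
      (Set.subset_union_left.trans (subset_convexHull ℝ _))) ?_
    rw [isOpen_ball.interior_eq, mem_ball_zero_iff, norm_smul,
      Real.norm_of_nonneg (inv_nonneg.mpr ht0.le), inv_mul_lt_iff₀ ht0, ← dist_eq_norm]
    exact hw
  have hw : w = t • v + (1 - t) • ζ := by
    simp only [v, smul_smul, mul_inv_cancel₀ ht0.ne', one_smul]; abel
  rw [hw]
  exact (convex_convexHull ℝ _).combo_interior_self_mem_interior hv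
    (subset_convexHull ℝ _ (Set.mem_union_right _ rfl)) ht0 (by linarith) (by ring)

lemma closedBall_subset_stolz (hρ0 : 0 ≤ ρ) (hρ1 : ρ ≤ 1) (hζ : ‖ζ‖ = 1) (hc : 0 ≤ c)
    (hcr : c * (1 + ρ) < r - ρ) (hl : l ∈ stolz ρ ζ) :
    closedBall l (c * dist l ζ) ⊆ stolz r ζ := by
  obtain ⟨t, ht0, ht1, hlt⟩ := exists_dist_smul_le_of_mem_stolz hρ0 hρ1 hζ hl
  have hdist : dist l ζ ≤ t * (1 + ρ) := by
    calc dist l ζ ≤ dist l ((1 - t) • ζ) + dist ((1 - t) • ζ) ζ := dist_triangle _ _ _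
      _ ≤ t * ρ + t := by
        gcongr
        rw [dist_eq_norm, show (1 - t) • ζ - ζ = -(t • ζ) by module, norm_neg, norm_smul,
          hζ, Real.norm_of_nonneg ht0.le, mul_one]
      _ = t * (1 + ρ) := by ring
  intro w hw
  refine ball_smul_subset_stolz ht0 ht1 ?_
  calc dist w ((1 - t) • ζ) ≤ dist w l + dist l ((1 - t) • ζ) := dist_triangle _ _ _
    _ ≤ c * (t * (1 + ρ)) + t * ρ := add_le_add (hw.trans (by gcongr)) hlt
    _ < t * r := by nlinarith

lemma tendsto_two_mul_dist_stolz (hρ : ρ ≤ 1) (hζ : ‖ζ‖ = 1) :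
    Tendsto (fun l => 2 * dist l ζ) (𝓝[stolz ρ ζ] ζ) (𝓝[>] 0) := by
  refine tendsto_nhdsWithin_iff.mpr ⟨?_, eventually_nhdsWithin_of_forall fun l hl => ?_⟩
  · have := ((continuous_id.dist (continuous_const (y := ζ))).const_mul 2).tendsto ζ
    simpa using this.mono_left nhdsWithin_le_nhds
  · simpa [Set.mem_Ioi] using ne_of_mem_stolz hρ hζ hl

end Stolz

/-- Lemma B of Aleman–Richter–Sundberg, with constants `ε₁` and `C₁`. -/
def MeanValueCapEstimate (ε₁ C₁ : ℝ) : Prop :=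
  ∀ R : ℝ, 0 < R → ∀ F ⊆ closedBall (0 : ℂ) R, gammaCap F < ENNReal.ofReal (R * ε₁) →
    ∀ g : ℂ → ℂ, (∃ U : Set ℂ, IsOpen U ∧ closedBall (0 : ℂ) R ⊆ U ∧ DifferentiableOn ℂ g U) →
      ∀ w ∈ ball (0 : ℂ) (R / 2),
        ‖g w‖ ≤ C₁ / (Real.pi * R ^ 2) * ∫ x in closedBall (0 : ℂ) R \ F, ‖g x‖ ∂volume

namespace MeanValueCapEstimate

variable {ε₁ C₁ ε ρ r c : ℝ} {f : ℂ → ℂ} {F : Set ℂ} {ζ b l : ℂ}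

lemma norm_sub_le {R : ℝ} {U : Set ℂ} {a : ℂ} (hMV : MeanValueCapEstimate ε₁ C₁) (hR : 0 < R)
    (hU : IsOpen U) (hRU : closedBall a R ⊆ U) (hf : DifferentiableOn ℂ f U)
    (hF : gammaCap F < ENNReal.ofReal (R * ε₁)) (hε : 0 ≤ ε)
    (hfb : ∀ w ∈ closedBall a R \ F, ‖f w - b‖ ≤ ε) : ‖f a - b‖ ≤ |C₁| * ε := by
  set g : ℂ → ℂ := fun z => f (z + a) - b
  set F₀ := closedBall (0 : ℂ) R ∩ (· + a) ⁻¹' F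
  have hshift : ∀ x, x ∈ closedBall (0 : ℂ) R ↔ x + a ∈ closedBall a R := by simp
  have hg : DifferentiableOn ℂ g ((· + a) ⁻¹' U) :=
    (hf.comp (differentiable_id.add_const a).differentiableOn fun _ hx => hx).sub_const b
  have hF₀ : gammaCap F₀ < ENNReal.ofReal (R * ε₁) :=
    ((gammaCap_mono Set.inter_subset_right).trans (gammaCap_preimage_add_le F a)).trans_lt hF
  have hmean := hMV R hR F₀ Set.inter_subset_left hF₀ g
    ⟨_, hU.preimage (continuous_add_const a), fun x hx => hRU ((hshift x).mp hx), hg⟩ 0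
    (mem_ball_self (by positivity))
  have hvol : volume.real (closedBall (0 : ℂ) R \ F₀) ≤ Real.pi * R ^ 2 :=
    calc _ ≤ volume.real (closedBall (0 : ℂ) R) :=
          measureReal_mono Set.sdiff_subset measure_closedBall_lt_top.ne
      _ = Real.pi * R ^ 2 := by simp [measureReal_def, hR.le, mul_comm]
  have hint : ∫ x in closedBall (0 : ℂ) R \ F₀, ‖g x‖ ≤ ε * (Real.pi * R ^ 2) :=
    calc _ ≤ ‖∫ x in closedBall (0 : ℂ) R \ F₀, ‖g x‖‖ := Real.le_norm_self _
      _ ≤ ε * volume.real (closedBall (0 : ℂ) R \ F₀) :=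
        norm_setIntegral_le_of_norm_le_const
          ((measure_mono Set.sdiff_subset).trans_lt measure_closedBall_lt_top) fun x hx => by
            simpa [g] using hfb _ ⟨(hshift x).mp hx.1, fun h => hx.2 ⟨hx.1, h⟩⟩
      _ ≤ ε * (Real.pi * R ^ 2) := by gcongr
  calc ‖f a - b‖ = ‖g 0‖ := by simp [g]
    _ ≤ C₁ / (Real.pi * R ^ 2) * ∫ x in closedBall (0 : ℂ) R \ F₀, ‖g x‖ := hmean
    _ ≤ |C₁| / (Real.pi * R ^ 2) * (ε * (Real.pi * R ^ 2)) :=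
      mul_le_mul (by gcongr; exact le_abs_self _) hint
        (integral_nonneg fun _ => norm_nonneg _) (by positivity)
    _ = |C₁| * ε := by field_simp

lemma norm_sub_le_of_mem_stolz (hMV : MeanValueCapEstimate ε₁ C₁) (hζ : ‖ζ‖ = 1) (hρ : 0 ≤ ρ)
    (hr1 : r < 1) (hc : 0 < c) (hcr : c * (1 + ρ) < r - ρ) (hf : DifferentiableOn ℂ f (stolz r ζ))
    (hl : l ∈ stolz ρ ζ) (hF : gammaCap F < ENNReal.ofReal (c * dist l ζ * ε₁)) (hε : 0 ≤ ε)
    (hfb : ∀ w ∈ (stolz r ζ ∩ ball ζ (2 * dist l ζ)) \ F, ‖f w - b‖ ≤ ε) :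
    ‖f l - b‖ ≤ |C₁| * ε := by
  have hρ1 : ρ ≤ 1 := by nlinarith
  have hc1 : c < 1 := by nlinarith
  have hd : 0 < dist l ζ := dist_pos.mpr (ne_of_mem_stolz hρ1 hζ hl)
  have hball := closedBall_subset_stolz hρ hρ1 hζ hc.le hcr hl
  have hballζ : closedBall l (c * dist l ζ) ⊆ ball ζ (2 * dist l ζ) := fun w hw =>
    calc dist w ζ ≤ dist w l + dist l ζ := dist_triangle _ _ _
      _ ≤ c * dist l ζ + dist l ζ := by gcongr; exact hw
      _ < 2 * dist l ζ := by nlinarith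
  exact hMV.norm_sub_le (by positivity) isOpen_interior hball hf hF hε
    fun w hw => hfb w ⟨⟨hball hw.1, hballζ hw.1⟩, hw.2⟩

end MeanValueCapEstimate

lemma ENNReal.eventually_lt_ofReal_mul_of_tendsto_div {μ : ℝ → ℝ≥0∞}
    (h : Tendsto (fun δ => μ δ / ENNReal.ofReal δ) (𝓝[>] 0) (𝓝 0)) {κ : ℝ} (hκ : 0 < κ) :
    ∀ᶠ δ in 𝓝[>] 0, μ δ < ENNReal.ofReal (κ * δ) := by
  filter_upwards [h.eventually_lt_const (ENNReal.ofReal_pos.mpr hκ), self_mem_nhdsWithin]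
    with δ hδ (hδ0 : 0 < δ)
  rwa [ENNReal.div_lt_iff (by simp [hδ0]) (by simp), ← ENNReal.ofReal_mul hκ.le] at hδ

theorem stmt11_general (ζ : ℂ) (hζ : ‖ζ‖ = 1) (r : ℝ) (hr1 : r < 1)
    (f : ℂ → ℂ) (hf : DifferentiableOn ℂ f (stolz r ζ)) (b : ℂ)
    (E : ℝ → Set ℂ)
    (hcap : Tendsto (fun δ : ℝ => gammaCap (E δ) / ENNReal.ofReal δ) (𝓝[>] (0 : ℝ))
      (𝓝 0))
    (happrox : ∀ ε : ℝ, 0 < ε → ∃ δ₁ > (0 : ℝ), ∀ δ : ℝ, 0 < δ → δ < δ₁ →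
      ∀ w ∈ (stolz r ζ ∩ Metric.ball ζ δ) \ E δ, ‖f w - b‖ ≤ ε)
    (hmv : ∃ ε₁ > (0 : ℝ), ∃ C₁ : ℝ, ∀ R : ℝ, 0 < R →
      ∀ Eset ⊆ Metric.closedBall (0 : ℂ) R, gammaCap Eset < ENNReal.ofReal (R * ε₁) →
        ∀ g : ℂ → ℂ,
          (∃ U : Set ℂ, IsOpen U ∧ Metric.closedBall (0 : ℂ) R ⊆ U ∧
            DifferentiableOn ℂ g U) →
          ∀ w ∈ Metric.ball (0 : ℂ) (R / 2),
            ‖g w‖ ≤ C₁ / (Real.pi * R ^ 2) *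
              ∫ x in Metric.closedBall (0 : ℂ) R \ Eset, ‖g x‖ ∂(volume : Measure ℂ)) :
    ∀ ρ : ℝ, 0 < ρ → ρ < r → Tendsto f (𝓝[stolz ρ ζ] ζ) (𝓝 b) := by
  intro ρ hρ0 hρr
  obtain ⟨ε₁, hε₁, C₁, hMV⟩ := hmv
  set c := (r - ρ) / (2 * (1 + ρ))
  have hc : 0 < c := div_pos (by linarith) (by linarith)
  have hcr : c * (1 + ρ) < r - ρ := by
    rw [div_mul_eq_mul_div, div_lt_iff₀ (by linarith)]; nlinarith
  have hcapδ :=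
    ENNReal.eventually_lt_ofReal_mul_of_tendsto_div hcap (by positivity : 0 < c * ε₁ / 2)
  refine Metric.tendsto_nhds.mpr fun ε hε => ?_
  obtain ⟨δ₁, hδ₁, hfb⟩ := happrox (ε / (|C₁| + 1)) (by positivity)
  filter_upwards [self_mem_nhdsWithin, (tendsto_two_mul_dist_stolz (by linarith) hζ).eventually
    (hcapδ.and (Ioo_mem_nhdsGT hδ₁))] with l hl ⟨hFl, hδl⟩
  rw [dist_eq_norm]
  refine (MeanValueCapEstimate.norm_sub_le_of_mem_stolz hMV hζ hρ0.le hr1 hc hcr hf hl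
    (by convert hFl using 2; ring) (by positivity) (hfb _ hδl.1 hδl.2)).trans_lt ?_
  rw [mul_div_assoc', div_lt_iff₀ (by positivity)]
  nlinarith [abs_nonneg C₁]

/-- Lemma 3.8: Suppose `f` is analytic on `S_r(ζ)` at `ζ ∈ 𝕋`, and for
each small `δ > 0` there is an exceptional set `E δ ⊆ B(ζ,δ)` with `γ(E δ)/δ → 0`
and `sup{|f(λ) − b| : λ ∈ S_r(ζ) ∩ B(ζ,δ) ∖ E δ} → 0` as `δ → 0`.  Assume also the
capacitary mean-value estimate (Lemma B of Aleman–Richter–Sundberg).  Then for every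
`0 < ρ < r`, `f(λ) → b` as `λ → ζ` within `S_ρ(ζ)`. -/
theorem stmt11 (ζ : ℂ) (hζ : ‖ζ‖ = 1) (r : ℝ) (hr0 : 0 < r) (hr1 : r < 1)
    (f : ℂ → ℂ) (hf : DifferentiableOn ℂ f (stolz r ζ)) (b : ℂ)
    (E : ℝ → Set ℂ) (δ₀ : ℝ) (hδ₀ : 0 < δ₀)
    (hEsub : ∀ δ : ℝ, 0 < δ → δ < δ₀ → E δ ⊆ Metric.ball ζ δ)
    (hcap : Tendsto (fun δ : ℝ => gammaCap (E δ) / ENNReal.ofReal δ) (𝓝[>] (0 : ℝ))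
      (𝓝 0))
    (happrox : ∀ ε : ℝ, 0 < ε → ∃ δ₁ > (0 : ℝ), ∀ δ : ℝ, 0 < δ → δ < δ₁ →
      ∀ w ∈ (stolz r ζ ∩ Metric.ball ζ δ) \ E δ, ‖f w - b‖ ≤ ε)
    (hmv : ∃ ε₁ > (0 : ℝ), ∃ C₁ : ℝ, ∀ R : ℝ, 0 < R →
      ∀ Eset ⊆ Metric.closedBall (0 : ℂ) R, gammaCap Eset < ENNReal.ofReal (R * ε₁) →
        ∀ g : ℂ → ℂ,
          (∃ U : Set ℂ, IsOpen U ∧ Metric.closedBall (0 : ℂ) R ⊆ U ∧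
            DifferentiableOn ℂ g U) →
          ∀ w ∈ Metric.ball (0 : ℂ) (R / 2),
            ‖g w‖ ≤ C₁ / (Real.pi * R ^ 2) *
              ∫ x in Metric.closedBall (0 : ℂ) R \ Eset, ‖g x‖ ∂(volume : Measure ℂ)) :
    ∀ ρ : ℝ, 0 < ρ → ρ < r → Tendsto f (𝓝[stolz ρ ζ] ζ) (𝓝 b) :=
  stmt11_general ζ hζ r hr1 f hf b E hcap happrox hmv
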